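/- arXiv:1904.04944 — 2 statements merged into one kernel-verified Lean document; each statement's English description precedes it below -/
import Mathlib

section
/- Let f ∈ S be a polynomial homogeneous with respect to the modular grading. Then f lies in the ideal R(d) = (g_0,...,g_{n_1+n_2}) if and only if the polynomial (f / remd(f))^{1/d}, obtained by dividing f by remd(f) and then replacing each x_i^{d_1} by x_i and y_j^{d_2} by y_j, lies in the ideal R(1) generated by the elements G_t = Σ_{i+j=t} x_i y_j. -/
open MvPolynomial

def varMod (n₁ n₂ d₁ d₂ : ℕ) : (Fin (n₁ + 1) ⊕ Fin (n₂ + 1)) → ℕ :=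
  Sum.elim (fun _ => d₁) (fun _ => d₂)

noncomputable def gElt (K : Type*) [Field K] (n₁ n₂ d₁ d₂ t : ℕ) :
    MvPolynomial (Fin (n₁ + 1) ⊕ Fin (n₂ + 1)) K :=
  ∑ i : Fin (n₁ + 1), ∑ j : Fin (n₂ + 1),
    if (i : ℕ) + (j : ℕ) = t then X (Sum.inl i) ^ d₁ * X (Sum.inr j) ^ d₂ else 0

noncomputable def RIdeal (K : Type*) [Field K] (n₁ n₂ d₁ d₂ : ℕ) :
    Ideal (MvPolynomial (Fin (n₁ + 1) ⊕ Fin (n₂ + 1)) K) :=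
  Ideal.span (Set.range fun t : Fin (n₁ + n₂ + 1) => gElt K n₁ n₂ d₁ d₂ (t : ℕ))

/-! Let `ψ = bind₁ (X i ↦ X i ^ d i)` and `r < d` componentwise. The linear map `π = contract d r`
keeping the monomials `x^a` with `a ≡ r (mod d)` and sending them to `x^(a / d)` (on the paper's
modular-homogeneous `f`, this is `(f / remd f)^{1/d}`) satisfies `π (p * ψ q) = π p * q` and
`π (x^r) = 1`. Applying `π` to a relation `ψ h * x^r = ∑ cₜ g_t = ∑ cₜ ψ(G_t)` gives
`h = ∑ π(cₜ) G_t`; conversely `ψ` maps `R(1)` into `R(d)`, since `ψ (G_t) = g_t`. -/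

theorem Ideal.apply_mem_of_mem_map {A B : Type*} [CommSemiring A] [CommSemiring B]
    (ψ : B →+* A) (π : A →+ B) (hπ : ∀ p q, π (p * ψ q) = π p * q) {J : Ideal B} {x : A}
    (hx : x ∈ J.map ψ) : π x ∈ J := by
  rw [Ideal.map, Ideal.span] at hx
  suffices ∀ a, π (a * x) ∈ J by simpa using this 1
  induction hx using Submodule.span_induction with
  | mem y hy =>
    obtain ⟨j, hj, rfl⟩ := hy
    exact fun a => hπ a j ▸ J.mul_mem_left _ hj
  | zero => simp
  | add y z _ _ hy hz => exact fun a => by rw [mul_add, map_add]; exact J.add_mem (hy a) (hz a)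
  | smul b y _ hy => exact fun a => by rw [smul_eq_mul, ← mul_assoc]; exact hy (a * b)

namespace MvPolynomial

variable {σ K : Type*} [CommSemiring K] (d : σ → ℕ) (r : σ →₀ ℕ)

noncomputable def expDiv (a : σ →₀ ℕ) : σ →₀ ℕ :=
  Finsupp.onFinset a.support (fun i => a i / d i) fun i hi =>
    Finsupp.mem_support_iff.mpr fun h0 => hi (by simp [h0])

@[simp] lemma expDiv_apply (a : σ →₀ ℕ) (i : σ) : expDiv d a i = a i / d i := rfl

lemma expDiv_add_single {d : σ → ℕ} (hd : ∀ i, 0 < d i) (a : σ →₀ ℕ) (i : σ) :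
    expDiv d (a + Finsupp.single i (d i)) = expDiv d a + Finsupp.single i 1 := by
  ext j
  rcases eq_or_ne j i with rfl | hne
  · simp [Nat.add_div_right _ (hd j)]
  · simp [hne.symm]

open scoped Classical in
noncomputable def contract : MvPolynomial σ K →ₗ[K] MvPolynomial σ K :=
  (Finsupp.lsum K fun a => if ∀ i, a i % d i = r i then monomial (expDiv d a) else 0) ∘ₗ
    (AddMonoidAlgebra.coeffLinearEquiv K).toLinearMap

open scoped Classical in
lemma contract_monomial (a : σ →₀ ℕ) (c : K) :
    contract d r (monomial a c) =
      if ∀ i, a i % d i = r i then monomial (expDiv d a) c else 0 := by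
  rw [← single_eq_monomial]
  show Finsupp.lsum K _ (Finsupp.single a c) = _
  rw [Finsupp.lsum_single]
  split_ifs <;> simp

lemma contract_monomial_self (hr : ∀ i, r i < d i) : contract d r (monomial r (1 : K)) = 1 := by
  have hdiv : expDiv d r = 0 := by ext i; simp [Nat.div_eq_of_lt (hr i)]
  rw [contract_monomial, if_pos fun i => Nat.mod_eq_of_lt (hr i), hdiv, monomial_zero', C_1]

variable {d}

lemma contract_mul_X_pow (hd : ∀ i, 0 < d i) (p : MvPolynomial σ K) (i : σ) :
    contract d r (p * X i ^ d i) = contract d r p * X i := by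
  induction p using MvPolynomial.induction_on' with
  | monomial a c =>
    have hmod : (∀ j, (a + Finsupp.single i (d i)) j % d j = r j) ↔ ∀ j, a j % d j = r j := by
      refine forall_congr' fun j => ?_
      rcases eq_or_ne j i with rfl | hne
      · simp
      · simp [hne.symm]
    rw [X_pow_eq_monomial, monomial_mul, mul_one, contract_monomial, contract_monomial,
      expDiv_add_single hd]
    split_ifs with h₁ h₂ h₂
    · rw [X, monomial_mul, mul_one]
    · exact absurd (hmod.mp h₁) h₂
    · exact absurd (hmod.mpr h₂) h₁
    · rw [zero_mul]
  | add p q hp hq => rw [add_mul, map_add, map_add, hp, hq, add_mul]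

lemma contract_mul_bind₁_X_pow (hd : ∀ i, 0 < d i) (p q : MvPolynomial σ K) :
    contract d r (p * bind₁ (fun i => X i ^ d i) q) = contract d r p * q := by
  induction q using MvPolynomial.induction_on generalizing p with
  | C a => rw [bind₁_C_right, mul_comm, ← smul_eq_C_mul, map_smul, smul_eq_C_mul, mul_comm]
  | add q₁ q₂ h₁ h₂ => rw [map_add, mul_add, map_add, h₁, h₂, mul_add]
  | mul_X q i hq =>
    rw [map_mul (bind₁ _), bind₁_X_right, ← mul_assoc, mul_right_comm, hq, contract_mul_X_pow r hd,
      mul_right_comm, mul_assoc]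

end MvPolynomial

lemma gElt_eq_bind₁ (K : Type*) [Field K] (n₁ n₂ d₁ d₂ t : ℕ) :
    gElt K n₁ n₂ d₁ d₂ t = bind₁ (fun i => X i ^ varMod n₁ n₂ d₁ d₂ i) (gElt K n₁ n₂ 1 1 t) := by
  simp only [gElt, map_sum, apply_ite, map_zero, map_mul, bind₁_X_right, pow_one]
  rfl

lemma RIdeal_eq_map (K : Type*) [Field K] (n₁ n₂ d₁ d₂ : ℕ) :
    RIdeal K n₁ n₂ d₁ d₂ =
      (RIdeal K n₁ n₂ 1 1).map (bind₁ fun i => X i ^ varMod n₁ n₂ d₁ d₂ i) := by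
  rw [RIdeal, RIdeal, Ideal.map_span, ← Set.range_comp]
  simp only [Function.comp_def, ← gElt_eq_bind₁]

theorem stmt_9_general (K : Type*) [Field K] (n₁ n₂ d₁ d₂ : ℕ)
    (h : MvPolynomial (Fin (n₁ + 1) ⊕ Fin (n₂ + 1)) K)
    (r : (Fin (n₁ + 1) ⊕ Fin (n₂ + 1)) →₀ ℕ)
    (hr : ∀ i, r i < varMod n₁ n₂ d₁ d₂ i) :
    (bind₁ (fun i => (X i : MvPolynomial (Fin (n₁ + 1) ⊕ Fin (n₂ + 1)) K) ^
          varMod n₁ n₂ d₁ d₂ i) h) * monomial r (1 : K) ∈ RIdeal K n₁ n₂ d₁ d₂ ↔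
      h ∈ RIdeal K n₁ n₂ 1 1 := by
  have hd : ∀ i, 0 < varMod n₁ n₂ d₁ d₂ i := fun i => (Nat.zero_le _).trans_lt (hr i)
  rw [RIdeal_eq_map]
  constructor
  · intro hf
    have hπ := Ideal.apply_mem_of_mem_map _ (contract (varMod n₁ n₂ d₁ d₂) r).toAddMonoidHom
      (contract_mul_bind₁_X_pow r hd) hf
    rwa [LinearMap.toAddMonoidHom_coe, mul_comm, contract_mul_bind₁_X_pow r hd,
      contract_monomial_self _ _ hr, one_mul] at hπ
  · exact fun hh => Ideal.mul_mem_right _ _ (Ideal.mem_map_of_mem _ hh)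

/-- Ideal membership for `R(d)` reduces to ideal membership for `R(1)`: a modular-homogeneous
polynomial `f`, written as `f = ψ(h)·x^r` with `r` the common `remd` of its monomials
(`r i < d₁` resp. `d₂` componentwise) and `ψ : x_i ↦ x_i^{d₁}, y_j ↦ y_j^{d₂}` (so that
`h = (f / remd f)^{1/d}`), lies in `R(d)` if and only if `h` lies in `R(1)`. -/
theorem stmt_9 (K : Type*) [Field K] (n₁ n₂ d₁ d₂ : ℕ)
    (hn₁ : 1 ≤ n₁) (hn₂ : 1 ≤ n₂) (hd₁ : 1 ≤ d₁) (hd₂ : 1 ≤ d₂)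
    (h : MvPolynomial (Fin (n₁ + 1) ⊕ Fin (n₂ + 1)) K)
    (r : (Fin (n₁ + 1) ⊕ Fin (n₂ + 1)) →₀ ℕ)
    (hr : ∀ i, r i < varMod n₁ n₂ d₁ d₂ i) :
    (bind₁ (fun i => (X i : MvPolynomial (Fin (n₁ + 1) ⊕ Fin (n₂ + 1)) K) ^
          varMod n₁ n₂ d₁ d₂ i) h) * monomial r (1 : K) ∈ RIdeal K n₁ n₂ d₁ d₂ ↔
      h ∈ RIdeal K n₁ n₂ 1 1 :=
  stmt_9_general K n₁ n₂ d₁ d₂ h r hr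
end

section
/- Let d = (1,1), n_1,n_2 ≥ 1, and let R(1) = (g_0,...,g_{n_1+n_2}) with g_t = Σ_{i+j=t} x_i y_j. If a = (1, a_2) with a_2 ≥ 1 and k ≤ a_2 − 1, then every monomial of bidegree (1, a_2) and index weighted degree k (weights: x_i has weight i, y_j has weight j) lies in R(1); i.e., the graded piece (S/R(1))_{(1,a_2),k} = 0. -/
/-! Write `x_i y^w` for the monomial with `x`-part `x_i` and `y`-exponent `w`. If the weight of `w`
is below its degree, `y_0` divides `y^w`, and `x_i y_0 = g_i - ∑_{i' < i} x_{i'} y_{i - i'}`.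
Every term on the right again has weight plus `x`-index below its `y`-degree, so strong induction
on `i` puts `x_i y^w` in `R(1)`. The hypotheses `k ≤ a₂ - 1`, `1 ≤ a₂` say exactly this for the
given monomial. -/

open MvPolynomial

/-- The `x`-degree of a monomial exponent vector. -/
def deg1 (n₁ n₂ : ℕ) (v : (Fin (n₁ + 1) ⊕ Fin (n₂ + 1)) →₀ ℕ) : ℕ :=
  ∑ i : Fin (n₁ + 1), v (Sum.inl i)

/-- The `y`-degree of a monomial exponent vector. -/
def deg2 (n₁ n₂ : ℕ) (v : (Fin (n₁ + 1) ⊕ Fin (n₂ + 1)) →₀ ℕ) : ℕ :=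
  ∑ j : Fin (n₂ + 1), v (Sum.inr j)

/-- The index weighted degree in the `d = (1,1)` case: `x_i` has weight `i`, `y_j` weight `j`. -/
def idxDeg (n₁ n₂ : ℕ) (v : (Fin (n₁ + 1) ⊕ Fin (n₂ + 1)) →₀ ℕ) : ℕ :=
  ∑ i : Fin (n₁ + 1), (i : ℕ) * v (Sum.inl i) + ∑ j : Fin (n₂ + 1), (j : ℕ) * v (Sum.inr j)

open Finsupp

theorem Ideal.mem_of_sum_mem_of_forall_ne {ι R : Type*} [CommRing R] {I : Ideal R}
    {s : Finset ι} {f : ι → R} {a : ι} (ha : a ∈ s) (hsum : ∑ i ∈ s, f i ∈ I)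
    (hf : ∀ i ∈ s, i ≠ a → f i ∈ I) : f a ∈ I := by
  classical
  rw [← Finset.add_sum_erase s f ha] at hsum
  refine (I.add_mem_iff_left (I.sum_mem fun i hi => ?_)).mp hsum
  exact hf i (Finset.mem_of_mem_erase hi) (Finset.ne_of_mem_erase hi)

theorem Finsupp.degree_le_apply_zero_add_weight {n : ℕ} (w : Fin (n + 1) →₀ ℕ) :
    w.degree ≤ w 0 + w.weight Fin.val := by
  rw [degree_eq_sum, weight_eq_sum, Fin.sum_univ_succ, Fin.sum_univ_succ]
  simp only [smul_eq_mul, Fin.val_zero, mul_zero, zero_add, Fin.val_succ]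
  gcongr with j
  exact Nat.le_mul_of_pos_right _ j.succ_pos

theorem Finsupp.exists_eq_single_zero_add {n : ℕ} {w : Fin (n + 1) →₀ ℕ}
    (hw : w.weight Fin.val < w.degree) : ∃ w', w = single 0 1 + w' := by
  have h0 : w 0 ≠ 0 := by
    have := w.degree_le_apply_zero_add_weight
    omega
  exact ⟨w - single 0 1, by rw [add_comm (single 0 1), sub_add_single_one_cancel h0]⟩

section

variable {K : Type*} [Field K] {n₁ n₂ : ℕ}

theorem gElt_one_one_eq (t : ℕ) :
    gElt K n₁ n₂ 1 1 t = ∑ p : Fin (n₁ + 1) × Fin (n₂ + 1),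
      if (p.1 : ℕ) + p.2 = t then monomial (sumElim (single p.1 1) (single p.2 1)) (1 : K)
      else 0 := by
  rw [gElt, Fintype.sum_prod_type]
  simp only [pow_one, X, monomial_mul, mul_one, sumElim_single_single]

theorem gElt_one_one_mul_monomial (t : ℕ) (w : Fin (n₂ + 1) →₀ ℕ) :
    gElt K n₁ n₂ 1 1 t * monomial (sumElim 0 w) 1 = ∑ p : Fin (n₁ + 1) × Fin (n₂ + 1),
      if (p.1 : ℕ) + p.2 = t then monomial (sumElim (single p.1 1) (single p.2 1 + w)) (1 : K)
      else 0 := by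
  simp only [gElt_one_one_eq, Finset.sum_mul, ite_mul, zero_mul, monomial_mul, mul_one,
    ← sumElim_add, add_zero]

theorem monomial_sumElim_mem_RIdeal (i : Fin (n₁ + 1)) (w : Fin (n₂ + 1) →₀ ℕ)
    (h : i + w.weight Fin.val < w.degree) :
    monomial (sumElim (single i 1) w) (1 : K) ∈ RIdeal K n₁ n₂ 1 1 := by
  induction i using Fin.strong_induction_on generalizing w with
  | h i IH =>
  obtain ⟨w, rfl⟩ := exists_eq_single_zero_add (w := w) (by omega)
  have hg : gElt K n₁ n₂ 1 1 i ∈ RIdeal K n₁ n₂ 1 1 :=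
    Ideal.subset_span ⟨⟨i, by omega⟩, rfl⟩
  have hsum := gElt_one_one_mul_monomial (K := K) i w ▸
    Ideal.mul_mem_right (monomial (sumElim 0 w) 1) _ hg
  have hdiag := Ideal.mem_of_sum_mem_of_forall_ne (Finset.mem_univ (i, 0)) hsum ?_
  · simpa using hdiag
  rintro p - hp
  split_ifs with hp_sum
  · have hp_lt : p.1 < i := by
      refine lt_of_le_of_ne (by omega) fun hp1 => hp (Prod.ext hp1 (Fin.ext ?_))
      rw [hp1] at hp_sum
      simpa using hp_sum
    refine IH p.1 hp_lt _ ?_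
    simp only [map_add, weight_single, degree_single, smul_eq_mul, one_mul, Fin.val_zero]
      at h ⊢
    omega
  · exact Ideal.zero_mem _

theorem deg1_sumElim (x : Fin (n₁ + 1) →₀ ℕ) (w : Fin (n₂ + 1) →₀ ℕ) :
    deg1 n₁ n₂ (sumElim x w) = x.degree := by
  simp [deg1, degree_eq_sum]

theorem deg2_sumElim (x : Fin (n₁ + 1) →₀ ℕ) (w : Fin (n₂ + 1) →₀ ℕ) :
    deg2 n₁ n₂ (sumElim x w) = w.degree := by
  simp [deg2, degree_eq_sum]

theorem idxDeg_sumElim (x : Fin (n₁ + 1) →₀ ℕ) (w : Fin (n₂ + 1) →₀ ℕ) :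
    idxDeg n₁ n₂ (sumElim x w) = x.weight Fin.val + w.weight Fin.val := by
  simp [idxDeg, weight_eq_sum, mul_comm]

end

theorem stmt_10_general (K : Type*) [Field K] (n₁ n₂ : ℕ)
    (a₂ k : ℕ) (ha₂ : 1 ≤ a₂) (hk : k ≤ a₂ - 1)
    (v : (Fin (n₁ + 1) ⊕ Fin (n₂ + 1)) →₀ ℕ)
    (h1 : deg1 n₁ n₂ v = 1) (h2 : deg2 n₁ n₂ v = a₂) (hidx : idxDeg n₁ n₂ v = k) :
    monomial v (1 : K) ∈ RIdeal K n₁ n₂ 1 1 := by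
  obtain ⟨x, w, rfl⟩ : ∃ x w, v = sumElim x w :=
    ⟨_, _, (comapDomain_sumElim_comapDomain v).symm⟩
  simp only [deg1_sumElim, deg2_sumElim, idxDeg_sumElim] at h1 h2 hidx
  obtain ⟨i, rfl⟩ := (sum_eq_one_iff x).mp h1
  simp only [weight_single, smul_eq_mul, one_mul] at hidx
  exact monomial_sumElim_mem_RIdeal i w (by omega)

/-- For `d = (1,1)`: every monomial of bidegree `(1, a₂)` and index weighted degree
`k ≤ a₂ − 1` lies in `R(1)`. -/
theorem stmt_10 (K : Type*) [Field K] (n₁ n₂ : ℕ)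
    (hn₁ : 1 ≤ n₁) (hn₂ : 1 ≤ n₂) (a₂ k : ℕ) (ha₂ : 1 ≤ a₂) (hk : k ≤ a₂ - 1)
    (v : (Fin (n₁ + 1) ⊕ Fin (n₂ + 1)) →₀ ℕ)
    (h1 : deg1 n₁ n₂ v = 1) (h2 : deg2 n₁ n₂ v = a₂) (hidx : idxDeg n₁ n₂ v = k) :
    monomial v (1 : K) ∈ RIdeal K n₁ n₂ 1 1 :=
  stmt_10_general K n₁ n₂ a₂ k ha₂ hk v h1 h2 hidx
end
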